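/- arXiv:1311.5736 — 2 statements merged into one kernel-verified Lean document; each statement's English description precedes it below -/
import Mathlib

section
/- Let f : [a,b] → ℝ be such that f^{(n-1)} (n ≥ 1) is absolutely continuous on [a,b] and |f^{(n)}| is quasi-convex on [a,b]. Then |∫_a^b f(t) dt - Σ_{k=0}^{n-1} (1/(k+1)!)((b-a)/2)^{k+1}[f^{(k)}(a) + (-1)^k f^{(k)}(b)]| ≤ ((b-a)^{n+1}/(2^{n+1}(n+1)!))·{max{|f^{(n)}(a)|, |f^{(n)}((a+b)/2)|} + max{|f^{(n)}((a+b)/2)|, |f^{(n)}(b)|}}. -/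
/-!
Integrating by parts `n` times against the kernel `(t - m)ⁿ / n!`, with `m = (a + b) / 2` the
midpoint, expresses `∫ₐᵇ f` as the boundary sum in the statement plus the remainder
`(-1)ⁿ / n! ∫ₐᵇ (t - m)ⁿ f⁽ⁿ⁾(t) dt`; the boundary terms are symmetric because `b - m = m - a`.
On each half `[a, m]` and `[m, b]` quasi-convexity bounds `|f⁽ⁿ⁾|` by its maximum at the two
endpoints, and `∫ |t - m|ⁿ` over either half equals `((b - a) / 2)ⁿ⁺¹ / (n + 1)`.
-/

open MeasureTheory Set Interval

theorem QuasiconvexOn.le_max_of_mem_segment {g : ℝ → ℝ} {s : Set ℝ} {u v t : ℝ}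
    (hg : QuasiconvexOn ℝ s g) (hu : u ∈ s) (hv : v ∈ s) (ht : t ∈ segment ℝ u v) :
    g t ≤ max (g u) (g v) :=
  ((hg _).segment_subset ⟨hu, le_max_left _ _⟩ ⟨hv, le_max_right _ _⟩ ht).2

theorem integral_sub_pow_mul_eq {g g' : ℝ → ℝ} {c d : ℝ} (p : ℝ) (n : ℕ)
    (hg : ∀ t ∈ uIcc c d, HasDerivAt g (g' t) t) (hg' : IntervalIntegrable g' volume c d) :
    ∫ t in c..d, (t - p) ^ n * g t =
      ((d - p) ^ (n + 1) * g d - (c - p) ^ (n + 1) * g c -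
        ∫ t in c..d, (t - p) ^ (n + 1) * g' t) / (n + 1) := by
  have hpow : ∀ t ∈ uIcc c d, HasDerivAt (fun t ↦ (t - p) ^ (n + 1))
      ((n + 1 : ℕ) * (t - p) ^ n) t := fun t _ ↦ by
    simpa using ((hasDerivAt_id t).sub_const p).fun_pow (n + 1)
  have hpow' : Continuous fun t : ℝ ↦ ((n + 1 : ℕ) : ℝ) * (t - p) ^ n := by fun_prop
  have ibp := intervalIntegral.integral_mul_deriv_eq_deriv_mul hpow hg
    (hpow'.intervalIntegrable c d) hg'
  simp_rw [mul_assoc, intervalIntegral.integral_const_mul] at ibp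
  push_cast at ibp
  rw [eq_div_iff (by positivity)]
  linarith

theorem integral_eq_sum_add_integral_iteratedDeriv (f : ℝ → ℝ) {c d : ℝ} (p : ℝ) (n : ℕ)
    (hderiv : ∀ k < n, ∀ t ∈ uIcc c d,
      HasDerivAt (iteratedDeriv k f) (iteratedDeriv (k + 1) f t) t)
    (hint : IntervalIntegrable (iteratedDeriv n f) volume c d) :
    ∫ t in c..d, f t =
      ∑ k ∈ Finset.range n, (-1) ^ k *
        ((d - p) ^ (k + 1) * iteratedDeriv k f d - (c - p) ^ (k + 1) * iteratedDeriv k f c) /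
          (k + 1).factorial +
      (-1) ^ n / n.factorial * ∫ t in c..d, (t - p) ^ n * iteratedDeriv n f t := by
  induction n with
  | zero => simp
  | succ n ih =>
    have hcont : ContinuousOn (iteratedDeriv n f) (uIcc c d) := fun t ht ↦
      (hderiv n n.lt_succ_self t ht).continuousAt.continuousWithinAt
    rw [ih (fun k hk ↦ hderiv k (hk.trans n.lt_succ_self)) hcont.intervalIntegrable,
      integral_sub_pow_mul_eq p n (hderiv n n.lt_succ_self) hint, Finset.sum_range_succ,
      Nat.factorial_succ]
    push_cast
    field_simp
    ring

theorem abs_integral_sub_pow_mul_le {g : ℝ → ℝ} {p q M : ℝ} (n : ℕ)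
    (hg : IntervalIntegrable g volume p q) (hM : ∀ t ∈ uIcc p q, |g t| ≤ M) :
    |∫ t in p..q, (t - p) ^ n * g t| ≤ M * (|q - p| ^ (n + 1) / (n + 1)) :=
  calc |∫ t in p..q, (t - p) ^ n * g t|
      ≤ ∫ t in Ι p q, |(t - p) ^ n * g t| := by
        simpa only [Real.norm_eq_abs] using
          intervalIntegral.norm_integral_le_integral_norm_uIoc (f := fun t ↦ (t - p) ^ n * g t)
    _ ≤ ∫ t in Ι p q, M * |t - p| ^ n := by
        have hpow : ContinuousOn (fun t ↦ (t - p) ^ n) (uIcc p q) := by fun_prop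
        refine setIntegral_mono_on (hg.continuousOn_mul hpow).def'.abs
          (by fun_prop : Continuous fun t ↦ M * |t - p| ^ n).integrableOn_uIoc measurableSet_uIoc
          fun t ht ↦ ?_
        rw [abs_mul, abs_pow, mul_comm]
        exact mul_le_mul_of_nonneg_right (hM t (uIoc_subset_uIcc ht)) (by positivity)
    _ = M * (|q - p| ^ (n + 1) / (n + 1)) := by
        rw [integral_const_mul, integral_pow_abs_sub_uIoc]

theorem abs_integral_sub_midpoint_pow_mul_le {g : ℝ → ℝ} {a b : ℝ} (hab : a ≤ b) (n : ℕ)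
    (hg : IntervalIntegrable g volume a b) (hq : QuasiconvexOn ℝ (Icc a b) fun t ↦ |g t|) :
    |∫ t in a..b, (t - (a + b) / 2) ^ n * g t| ≤
      ((b - a) / 2) ^ (n + 1) / (n + 1) *
        (max |g a| |g ((a + b) / 2)| + max |g ((a + b) / 2)| |g b|) := by
  set m := (a + b) / 2 with hm_def
  have ha : a ∈ Icc a b := left_mem_Icc.2 hab
  have hb : b ∈ Icc a b := right_mem_Icc.2 hab
  have hm : m ∈ Icc a b := ⟨by linarith, by linarith⟩
  have hma : uIcc m a ⊆ Icc a b := uIcc_subset_Icc hm ha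
  have hmb : uIcc m b ⊆ Icc a b := uIcc_subset_Icc hm hb
  have hab' : uIcc a b = Icc a b := uIcc_of_le hab
  have hdist_a : |a - m| = (b - a) / 2 := by rw [abs_of_nonpos] <;> linarith
  have hdist_b : |b - m| = (b - a) / 2 := by rw [abs_of_nonneg] <;> linarith
  have hleft : |∫ t in m..a, (t - m) ^ n * g t| ≤
      max |g a| |g m| * (((b - a) / 2) ^ (n + 1) / (n + 1)) := hdist_a ▸
    abs_integral_sub_pow_mul_le n (hg.mono_set (hab' ▸ hma)) fun t ht ↦
      hq.le_max_of_mem_segment ha hm (by rwa [segment_eq_uIcc, uIcc_comm])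
  have hright : |∫ t in m..b, (t - m) ^ n * g t| ≤
      max |g m| |g b| * (((b - a) / 2) ^ (n + 1) / (n + 1)) := hdist_b ▸
    abs_integral_sub_pow_mul_le n (hg.mono_set (hab' ▸ hmb)) fun t ht ↦
      hq.le_max_of_mem_segment hm hb (by rwa [segment_eq_uIcc])
  have hint : IntervalIntegrable (fun t ↦ (t - m) ^ n * g t) volume a b :=
    hg.continuousOn_mul (by fun_prop)
  rw [← intervalIntegral.integral_add_adjacent_intervals (hint.mono_set (hab' ▸ hma) |>.symm)
    (hint.mono_set (hab' ▸ hmb)), intervalIntegral.integral_symm m a]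
  calc _ ≤ |∫ t in m..a, (t - m) ^ n * g t| + |∫ t in m..b, (t - m) ^ n * g t| := by
        simpa only [abs_neg] using abs_add_le (-∫ t in m..a, (t - m) ^ n * g t) _
    _ ≤ _ := by linarith

theorem hasDerivAt_iteratedDeriv_of_lt {f : ℝ → ℝ} {n k : ℕ} {s : Set ℝ}
    (hf : ContDiff ℝ ((n - 1 : ℕ) : ℕ∞) f)
    (hf' : ∀ t ∈ s, HasDerivAt (iteratedDeriv (n - 1) f) (iteratedDeriv n f t) t)
    (hk : k < n) {t : ℝ} (ht : t ∈ s) :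
    HasDerivAt (iteratedDeriv k f) (iteratedDeriv (k + 1) f t) t := by
  rcases lt_or_ge (k + 1) n with hkn | hkn
  · rw [iteratedDeriv_succ]
    have hkn' : (k : WithTop ℕ∞) < ((n - 1 : ℕ) : ℕ∞) := by
      exact_mod_cast (by omega : k < n - 1)
    exact (hf.differentiable_iteratedDeriv k hkn' t).hasDerivAt
  · obtain rfl : n = k + 1 := by omega
    exact hf' t ht

theorem stmt_3_general (f : ℝ → ℝ) (a b : ℝ) (hab : a < b) (n : ℕ)
    (hf : ContDiff ℝ ((n - 1 : ℕ) : ℕ∞) f)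
    (hf' : ∀ t ∈ Set.Icc a b,
      HasDerivAt (iteratedDeriv (n - 1) f) (iteratedDeriv n f t) t)
    (hint : IntervalIntegrable (iteratedDeriv n f) volume a b)
    (hq : ∀ u ∈ Set.Icc a b, ∀ v ∈ Set.Icc a b, ∀ α ∈ Set.Icc (0 : ℝ) 1,
      |iteratedDeriv n f (α * u + (1 - α) * v)| ≤
        max |iteratedDeriv n f u| |iteratedDeriv n f v|) :
    |(∫ t in a..b, f t) -
      ∑ k ∈ Finset.range n, (1 / (Nat.factorial (k + 1) : ℝ)) *
        ((b - a) / 2) ^ (k + 1) *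
          (iteratedDeriv k f a + (-1 : ℝ) ^ k * iteratedDeriv k f b)| ≤
    ((b - a) ^ (n + 1) / (2 ^ (n + 1) * (Nat.factorial (n + 1) : ℝ))) *
      (max |iteratedDeriv n f a| |iteratedDeriv n f ((a + b) / 2)| +
       max |iteratedDeriv n f ((a + b) / 2)| |iteratedDeriv n f b|) := by
  have hquasi : QuasiconvexOn ℝ (Icc a b) fun t ↦ |iteratedDeriv n f t| :=
    quasiconvexOn_iff_le_max.2 ⟨convex_Icc a b, fun u hu v hv α β hα _ hαβ ↦ by
      simpa [← hαβ] using hq u hu v hv α ⟨hα, by linarith⟩⟩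
  have htaylor := integral_eq_sum_add_integral_iteratedDeriv f ((a + b) / 2) n
    (fun k hk t ht ↦ hasDerivAt_iteratedDeriv_of_lt hf hf' hk (uIcc_of_le hab.le ▸ ht)) hint
  have hsum : ∀ k : ℕ, (-1) ^ k * ((b - (a + b) / 2) ^ (k + 1) * iteratedDeriv k f b -
      (a - (a + b) / 2) ^ (k + 1) * iteratedDeriv k f a) / ((k + 1).factorial : ℝ) =
      1 / ((k + 1).factorial : ℝ) * ((b - a) / 2) ^ (k + 1) *
        (iteratedDeriv k f a + (-1) ^ k * iteratedDeriv k f b) := fun k ↦ by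
    have hsq : (-1 : ℝ) ^ k * (-1) ^ k = 1 := by rw [← mul_pow]; norm_num
    rw [show a - (a + b) / 2 = -((b - a) / 2) by ring, neg_pow ((b - a) / 2), pow_succ (-1 : ℝ)]
    field_simp
    linear_combination (((b - a) / 2) ^ (k + 1) * iteratedDeriv k f a) * hsq
  simp only [hsum] at htaylor
  rw [htaylor, add_sub_cancel_left, abs_mul, abs_div, abs_pow, abs_neg, abs_one, one_pow,
    Nat.abs_cast]
  calc 1 / (n.factorial : ℝ) * |∫ t in a..b, (t - (a + b) / 2) ^ n * iteratedDeriv n f t|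
      ≤ 1 / n.factorial * (((b - a) / 2) ^ (n + 1) / (n + 1) *
          (max |iteratedDeriv n f a| |iteratedDeriv n f ((a + b) / 2)| +
            max |iteratedDeriv n f ((a + b) / 2)| |iteratedDeriv n f b|)) := by
        gcongr
        exact abs_integral_sub_midpoint_pow_mul_le hab.le n hint hquasi
    _ = _ := by
        rw [Nat.factorial_succ, div_pow]
        push_cast
        field_simp

theorem stmt_3 (f : ℝ → ℝ) (a b : ℝ) (hab : a < b) (n : ℕ) (hn : 1 ≤ n)
    (hf : ContDiff ℝ ((n - 1 : ℕ) : ℕ∞) f)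
    (hf' : ∀ t ∈ Set.Icc a b,
      HasDerivAt (iteratedDeriv (n - 1) f) (iteratedDeriv n f t) t)
    (hint : IntervalIntegrable (iteratedDeriv n f) volume a b)
    (hq : ∀ u ∈ Set.Icc a b, ∀ v ∈ Set.Icc a b, ∀ α ∈ Set.Icc (0 : ℝ) 1,
      |iteratedDeriv n f (α * u + (1 - α) * v)| ≤
        max |iteratedDeriv n f u| |iteratedDeriv n f v|) :
    |(∫ t in a..b, f t) -
      ∑ k ∈ Finset.range n, (1 / (Nat.factorial (k + 1) : ℝ)) *
        ((b - a) / 2) ^ (k + 1) *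
          (iteratedDeriv k f a + (-1 : ℝ) ^ k * iteratedDeriv k f b)| ≤
    ((b - a) ^ (n + 1) / (2 ^ (n + 1) * (Nat.factorial (n + 1) : ℝ))) *
      (max |iteratedDeriv n f a| |iteratedDeriv n f ((a + b) / 2)| +
       max |iteratedDeriv n f ((a + b) / 2)| |iteratedDeriv n f b|) :=
  stmt_3_general f a b hab n hf hf' hint hq
end

section
/- Let f : [a,b] → ℝ be differentiable with f' integrable and |f'|^q quasi-convex on [a,b], where p > 1, 1/p + 1/q = 1 (case n = 1 of Theorem 2.2). Then for all x ∈ [a,b]: |∫_a^b f(t) dt - (x-a)f(a) - (b-x)f(b)| ≤ (b-a)^{1/q}·(((x-a)^{p+1} + (b-x)^{p+1})/(p+1))^{1/p}·(max{|f'(a)|^q, |f'(b)|^q})^{1/q}. -/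
open MeasureTheory Set

/-! Integration by parts turns the left-hand side into `-∫ (t - x) f'(t) dt`. Quasi-convexity
bounds `|f'|^q` on `[a, b]` by its larger endpoint value, which leaves
`∫ |t - x| dt = ((x - a)² + (b - x)²) / 2`. That this is at most
`(b - a)^{1/q} (∫ |t - x|^p dt)^{1/p}` is Hölder's inequality; it is obtained here from the
one-interval bound `C² / 2 ≤ (C^{p+1} / (p+1))^{1/p} C^{1/q}` (equivalent to `p + 1 ≤ 2^p`)
on each side of `x`, combined by the two-term Hölder inequality. -/

lemma QuasiconvexOn.le_max_of_mem_segment_s18 {𝕜 E β : Type*} [Semiring 𝕜] [PartialOrder 𝕜]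
    [AddCommMonoid E] [LinearOrder β] [SMul 𝕜 E] {s : Set E} {f : E → β} {x y z : E}
    (hf : QuasiconvexOn 𝕜 s f) (hx : x ∈ s) (hy : y ∈ s) (hz : z ∈ segment 𝕜 x y) :
    f z ≤ max (f x) (f y) :=
  ((hf _).segment_subset ⟨hx, le_max_left _ _⟩ ⟨hy, le_max_right _ _⟩ hz).2

lemma QuasiconvexOn.le_max_of_mem_Icc {𝕜 β : Type*} [Field 𝕜] [LinearOrder 𝕜]
    [IsStrictOrderedRing 𝕜] [LinearOrder β] {s : Set 𝕜} {f : 𝕜 → β} {x y z : 𝕜}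
    (hf : QuasiconvexOn 𝕜 s f) (hx : x ∈ s) (hy : y ∈ s) (hz : z ∈ Icc x y) :
    f z ≤ max (f x) (f y) := by
  rw [← segment_eq_Icc (hz.1.trans hz.2)] at hz
  exact hf.le_max_of_mem_segment_s18 hx hy hz

lemma quasiconvexOn_of_le_max {β : Type*} [LinearOrder β] {s : Set ℝ} {f : ℝ → β}
    (hs : Convex ℝ s)
    (hf : ∀ u ∈ s, ∀ v ∈ s, ∀ α ∈ Icc (0 : ℝ) 1,
      f (α * u + (1 - α) * v) ≤ max (f u) (f v)) :
    QuasiconvexOn ℝ s f := by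
  refine quasiconvexOn_iff_le_max.2 ⟨hs, fun u hu v hv α γ hα hγ hαγ => ?_⟩
  obtain rfl : γ = 1 - α := by linarith
  exact hf u hu v hv α ⟨hα, by linarith⟩

lemma integral_abs_sub_of_mem_Icc {a b x : ℝ} (hx : x ∈ Icc a b) :
    ∫ t in a..b, |t - x| = ((x - a) ^ 2 + (b - x) ^ 2) / 2 := by
  have hcont : Continuous fun t : ℝ => |t - x| := by fun_prop
  rw [← intervalIntegral.integral_add_adjacent_intervals (hcont.intervalIntegrable a x)
    (hcont.intervalIntegrable x b)]
  have hleft : ∫ t in a..x, |t - x| = ∫ t in a..x, (x - t) :=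
    intervalIntegral.integral_congr fun t ht => by
      rw [uIcc_of_le hx.1] at ht
      simp [abs_of_nonpos (sub_nonpos.2 ht.2)]
  have hright : ∫ t in x..b, |t - x| = ∫ t in x..b, (t - x) :=
    intervalIntegral.integral_congr fun t ht => by
      rw [uIcc_of_le hx.2] at ht
      simp [abs_of_nonneg (sub_nonneg.2 ht.1)]
  rw [hleft, hright, intervalIntegral.integral_comp_sub_left (fun t => t),
    intervalIntegral.integral_comp_sub_right (fun t => t)]
  simp only [sub_self, integral_id, ne_eq, OfNat.ofNat_ne_zero, not_false_eq_true, zero_pow,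
    sub_zero]
  ring

lemma integral_sub_endpoint_terms_eq_neg_integral_mul_deriv {f f' : ℝ → ℝ} {a b : ℝ}
    (hf : ∀ t ∈ uIcc a b, HasDerivAt f (f' t) t) (hf' : IntervalIntegrable f' volume a b)
    (x : ℝ) :
    (∫ t in a..b, f t) - (x - a) * f a - (b - x) * f b = -∫ t in a..b, (t - x) * f' t := by
  have hid : ∀ t ∈ uIcc a b, HasDerivAt (fun s => s - x) 1 t := fun t _ =>
    (hasDerivAt_id t).sub_const x
  rw [intervalIntegral.integral_mul_deriv_eq_deriv_mul hid hf intervalIntegrable_const hf']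
  simp only [one_mul]
  ring

namespace Real

lemma add_one_le_two_rpow {p : ℝ} (hp : 1 ≤ p) : p + 1 ≤ 2 ^ p := by
  have := one_add_mul_self_le_rpow_one_add (s := 1) (by norm_num) hp
  norm_num at this
  linarith

lemma sq_div_two_le_rpow_mul_rpow {p q C : ℝ} (hpq : p.HolderConjugate q) (hC : 0 ≤ C) :
    C ^ 2 / 2 ≤ (C ^ (p + 1) / (p + 1)) ^ (1 / p) * C ^ (1 / q) := by
  have hp := hpq.pos
  have hexp : (p + 1) * (1 / p) + 1 / q = 2 := by
    have := hpq.inv_add_inv_eq_one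
    field_simp at this ⊢
    linarith
  have hroot : (p + 1) ^ (1 / p) ≤ 2 := by
    calc (p + 1) ^ (1 / p) ≤ ((2 : ℝ) ^ p) ^ (1 / p) := by
          gcongr
          exact add_one_le_two_rpow hpq.lt.le
      _ = 2 := by rw [← rpow_mul zero_le_two, mul_one_div_cancel hp.ne', rpow_one]
  calc C ^ 2 / 2 ≤ C ^ 2 / (p + 1) ^ (1 / p) := by gcongr
    _ = (C ^ (p + 1) / (p + 1)) ^ (1 / p) * C ^ (1 / q) := by
      rw [div_rpow (by positivity) (by positivity), ← rpow_mul hC, div_mul_eq_mul_div,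
        ← rpow_add' hC (by rw [hexp]; norm_num), hexp, rpow_two]

lemma rpow_mul_rpow_add_rpow_mul_rpow_le {p q u₁ u₂ v₁ v₂ : ℝ} (hpq : p.HolderConjugate q)
    (hu₁ : 0 ≤ u₁) (hu₂ : 0 ≤ u₂) (hv₁ : 0 ≤ v₁) (hv₂ : 0 ≤ v₂) :
    u₁ ^ (1 / p) * v₁ ^ (1 / q) + u₂ ^ (1 / p) * v₂ ^ (1 / q) ≤
      (u₁ + u₂) ^ (1 / p) * (v₁ + v₂) ^ (1 / q) := by
  have := inner_le_Lp_mul_Lq_of_nonneg (s := Finset.univ)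
    (f := ![u₁ ^ (1 / p), u₂ ^ (1 / p)]) (g := ![v₁ ^ (1 / q), v₂ ^ (1 / q)]) hpq
    (by intro i _; fin_cases i <;> simp <;> positivity)
    (by intro i _; fin_cases i <;> simp <;> positivity)
  simpa [← rpow_mul, hu₁, hu₂, hv₁, hv₂, hpq.ne_zero, hpq.symm.ne_zero] using this

lemma sq_add_sq_div_two_le {p q A B : ℝ} (hpq : p.HolderConjugate q) (hA : 0 ≤ A)
    (hB : 0 ≤ B) :
    (A ^ 2 + B ^ 2) / 2 ≤
      (A + B) ^ (1 / q) * ((A ^ (p + 1) + B ^ (p + 1)) / (p + 1)) ^ (1 / p) := by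
  have hp1 : 0 < p + 1 := by linarith [hpq.pos]
  calc (A ^ 2 + B ^ 2) / 2 = A ^ 2 / 2 + B ^ 2 / 2 := add_div _ _ _
    _ ≤ (A ^ (p + 1) / (p + 1)) ^ (1 / p) * A ^ (1 / q) +
        (B ^ (p + 1) / (p + 1)) ^ (1 / p) * B ^ (1 / q) :=
      add_le_add (sq_div_two_le_rpow_mul_rpow hpq hA) (sq_div_two_le_rpow_mul_rpow hpq hB)
    _ ≤ (A ^ (p + 1) / (p + 1) + B ^ (p + 1) / (p + 1)) ^ (1 / p) * (A + B) ^ (1 / q) :=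
      rpow_mul_rpow_add_rpow_mul_rpow_le hpq (by positivity) (by positivity) hA hB
    _ = _ := by rw [← add_div, mul_comm]

end Real

theorem stmt_18 (f : ℝ → ℝ) (a b : ℝ) (hab : a < b)
    (p q : ℝ) (hp : 1 < p) (hpq : 1 / p + 1 / q = 1)
    (hf : ∀ t ∈ Set.Icc a b, HasDerivAt f (deriv f t) t)
    (hint : IntervalIntegrable (deriv f) volume a b)
    (hq : ∀ u ∈ Set.Icc a b, ∀ v ∈ Set.Icc a b, ∀ α ∈ Set.Icc (0 : ℝ) 1,
      |deriv f (α * u + (1 - α) * v)| ^ q ≤ max (|deriv f u| ^ q) (|deriv f v| ^ q))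
    (x : ℝ) (hx : x ∈ Set.Icc a b) :
    |(∫ t in a..b, f t) - (x - a) * f a - (b - x) * f b| ≤
      (b - a) ^ (1 / q) *
        (((x - a) ^ (p + 1) + (b - x) ^ (p + 1)) / (p + 1)) ^ (1 / p) *
        (max (|deriv f a| ^ q) (|deriv f b| ^ q)) ^ (1 / q) := by
  have hpq' : p.HolderConjugate q := Real.holderConjugate_iff.2 ⟨hp, by simpa using hpq⟩
  set M := max (|deriv f a| ^ q) (|deriv f b| ^ q)
  have hderiv : ∀ t ∈ Icc a b, |deriv f t| ≤ M ^ (1 / q) := fun t ht => by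
    rw [one_div, Real.le_rpow_inv_iff_of_pos (abs_nonneg _) (by positivity) hpq'.symm.pos]
    have hconv := quasiconvexOn_of_le_max (f := fun t => |deriv f t| ^ q) (convex_Icc a b) hq
    exact hconv.le_max_of_mem_Icc (left_mem_Icc.2 hab.le) (right_mem_Icc.2 hab.le) ht
  rw [integral_sub_endpoint_terms_eq_neg_integral_mul_deriv (by rwa [uIcc_of_le hab.le]) hint,
    abs_neg]
  calc |∫ t in a..b, (t - x) * deriv f t| ≤ ∫ t in a..b, |t - x| * M ^ (1 / q) := by
        rw [← Real.norm_eq_abs]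
        refine intervalIntegral.norm_integral_le_of_norm_le hab.le
          (Filter.Eventually.of_forall fun t ht => ?_) (Continuous.intervalIntegrable ?_ a b)
        · rw [Real.norm_eq_abs, abs_mul]
          exact mul_le_mul_of_nonneg_left (hderiv t (Ioc_subset_Icc_self ht)) (abs_nonneg _)
        · fun_prop
    _ = ((x - a) ^ 2 + (b - x) ^ 2) / 2 * M ^ (1 / q) := by
        rw [intervalIntegral.integral_mul_const, integral_abs_sub_of_mem_Icc hx]
    _ ≤ _ := by
        gcongr
        simpa using Real.sq_add_sq_div_two_le hpq' (sub_nonneg.2 hx.1) (sub_nonneg.2 hx.2)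
end
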